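/- For n ≥ 1, the map w ↦ π^c, where π = (w_2 - 1)(w_3 - 1)···(w_{2n} - 1) and π^c(i) = 2n - π(i), is a bijection from {w ∈ A_{2n}(4312) : w_1 = 1} onto A_{2n-1}(1243). -/

import Mathlib

/-- `u` is a permutation of `{1,...,m}`, given as the word `u 0, u 1, ..., u (m-1)`. -/
def IsPermOn (m : ℕ) (u : Fin m → ℕ) : Prop :=
  Function.Injective u ∧ ∀ i, u i ∈ Finset.Icc 1 m

/-- up-down (alternating): u 0 < u 1 > u 2 < u 3 > ... -/
def UpDown (m : ℕ) (u : Fin m → ℕ) : Prop :=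
  ∀ i : ℕ, ∀ h : i + 1 < m,
    (i % 2 = 0 → u ⟨i, by omega⟩ < u ⟨i + 1, h⟩) ∧
    (i % 2 = 1 → u ⟨i + 1, h⟩ < u ⟨i, by omega⟩)

/-- down-up: u 0 > u 1 < u 2 > u 3 < ... -/
def DownUp (m : ℕ) (u : Fin m → ℕ) : Prop :=
  ∀ i : ℕ, ∀ h : i + 1 < m,
    (i % 2 = 0 → u ⟨i + 1, h⟩ < u ⟨i, by omega⟩) ∧
    (i % 2 = 1 → u ⟨i, by omega⟩ < u ⟨i + 1, h⟩)

/-- `u` contains the pattern `σ`. -/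
def Contains {m k : ℕ} (u : Fin m → ℕ) (σ : Fin k → ℕ) : Prop :=
  ∃ g : Fin k → Fin m, StrictMono g ∧ ∀ a b : Fin k, u (g a) < u (g b) ↔ σ a < σ b

def Avoids {m k : ℕ} (u : Fin m → ℕ) (σ : Fin k → ℕ) : Prop := ¬ Contains u σ

/-- The set `A_m(σ)` of σ-avoiding up-down alternating permutations of `{1,...,m}`. -/
def AvoidSet (m : ℕ) {k : ℕ} (σ : Fin k → ℕ) : Set (Fin m → ℕ) :=
  {u | IsPermOn m u ∧ UpDown m u ∧ Avoids u σ}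

def p1234 : Fin 4 → ℕ := ![1, 2, 3, 4]
def p1243 : Fin 4 → ℕ := ![1, 2, 4, 3]
def p2143 : Fin 4 → ℕ := ![2, 1, 4, 3]
def p4312 : Fin 4 → ℕ := ![4, 3, 1, 2]
def p3412 : Fin 4 → ℕ := ![3, 4, 1, 2]

/-- `f(u)`: max over 0 and the smaller entries of 21-patterns of `u`. -/
noncomputable def fval {m : ℕ} (u : Fin m → ℕ) : ℕ :=
  sSup ({0} ∪ {x | ∃ i j : Fin m, i < j ∧ u j < u i ∧ x = u j})

/-- `e(u)`: max over 0 and the smallest entries of 132-patterns of `u`. -/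
noncomputable def eval' {m : ℕ} (u : Fin m → ℕ) : ℕ :=
  sSup ({0} ∪ {x | ∃ i j k : Fin m, i < j ∧ j < k ∧ u i < u k ∧ u k < u j ∧ x = u i})

/-- `g(u)`: min over m+1 and the largest entries of 312-patterns of `u`. -/
noncomputable def gval {m : ℕ} (u : Fin m → ℕ) : ℕ :=
  sInf ({m + 1} ∪ {x | ∃ i j k : Fin m, i < j ∧ j < k ∧ u j < u k ∧ u k < u i ∧ x = u i})

/-- `h(u)`: min over m+1 and the larger entries of 12-patterns of `u`. -/
noncomputable def hval {m : ℕ} (u : Fin m → ℕ) : ℕ :=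
  sInf ({m + 1} ∪ {x | ∃ i j : Fin m, i < j ∧ u i < u j ∧ x = u j})

/-- the operation `v ↦ u`: prepend `v`, increasing every entry `≥ v` by 1. -/
def ins {m : ℕ} (v : ℕ) (u : Fin m → ℕ) : Fin (m + 1) → ℕ :=
  Fin.cases v (fun j => if u j < v then u j else u j + 1)

/-- standardization of a word with distinct entries. -/
def stWord {k : ℕ} (r : Fin k → ℕ) : Fin k → ℕ :=
  fun j => (Finset.univ.filter (fun i => r i ≤ r j)).card


/-!
Since `w₁ = 1` is the smallest letter, it cannot take part in an occurrence of `4312` (whose first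
letter is not its smallest), and it only forces `w₁ < w₂`. So `w` is an up-down `4312`-avoider
exactly when its tail `w₂ ⋯ w_{2n}` is a down-up `4312`-avoider. The map `x ↦ 2n - (x - 1)` is an
order-reversing involution of `{1, …, 2n}` sending the tail onto `{1, …, 2n - 1}`; reversing the
order turns down-up into up-down and `4312` into `1243`. Nothing here depends on the parity of the
length.
-/

lemma contains_iff_of_lt_iff_swap {m k : ℕ} {u v : Fin m → ℕ} {σ τ : Fin k → ℕ}
    (huv : ∀ i j, u i < u j ↔ v j < v i) (hστ : ∀ a b, σ a < σ b ↔ τ b < τ a) :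
    Contains u σ ↔ Contains v τ := by
  simp only [Contains, huv, hστ]
  exact exists_congr fun _ => and_congr_right fun _ => forall_comm

lemma upDown_iff_downUp_of_lt_iff_swap {m : ℕ} {u v : Fin m → ℕ}
    (huv : ∀ i j, u i < u j ↔ v j < v i) : UpDown m u ↔ DownUp m v := by
  simp only [UpDown, DownUp, huv]

lemma p4312_lt_iff_p1243_lt_swap : ∀ a b : Fin 4, p4312 a < p4312 b ↔ p1243 b < p1243 a := by
  decide

section Tail

variable {m N : ℕ}

def shiftPos (h : m + 1 = N) (i : Fin m) : Fin N := ⟨i + 1, by omega⟩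

lemma shiftPos_strictMono (h : m + 1 = N) : StrictMono (shiftPos h) := fun _ _ hij =>
  Fin.mk_lt_mk.2 (Nat.succ_lt_succ hij)

lemma contains_comp_shiftPos_iff (h : m + 1 = N) {k : ℕ} {w : Fin N → ℕ} {σ : Fin (k + 1) → ℕ}
    (hmin : ∀ i : Fin N, (i : ℕ) ≠ 0 → w ⟨0, by omega⟩ < w i) (hσ : ∃ a, σ a < σ 0) :
    Contains (w ∘ shiftPos h) σ ↔ Contains w σ := by
  constructor
  · rintro ⟨g, hg, hpat⟩
    exact ⟨shiftPos h ∘ g, (shiftPos_strictMono h).comp hg, hpat⟩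
  · rintro ⟨g, hg, hpat⟩
    obtain ⟨a, ha⟩ := hσ
    have hg0 : (g 0 : ℕ) ≠ 0 := by
      intro hg0
      have ha0 : 0 < a := Fin.pos_iff_ne_zero.2 (by rintro rfl; exact lt_irrefl _ ha)
      have hwa := hmin (g a) (by have := hg ha0; rw [Fin.lt_def] at this; omega)
      have hw0 : g 0 = ⟨0, by omega⟩ := Fin.ext hg0
      exact absurd ((hpat a 0).2 ha) (by rw [hw0]; exact hwa.not_gt)
    have hpos : ∀ b, (g b : ℕ) ≠ 0 := fun b => by
      have := hg.monotone (Fin.zero_le b); rw [Fin.le_def] at this; omega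
    refine ⟨fun b => ⟨g b - 1, by have := (g b).isLt; have := hpos b; omega⟩,
      fun b c hbc => ?_, fun b c => ?_⟩
    · have hlt := Fin.lt_def.1 (hg hbc); have := hpos b
      exact Fin.mk_lt_mk.2 (by omega)
    · have hshift : ∀ b, shiftPos h ⟨g b - 1, by have := (g b).isLt; omega⟩ = g b := fun b =>
        Fin.ext (by simp only [shiftPos]; have := hpos b; omega)
      simp only [Function.comp_apply, hshift, hpat]

lemma upDown_iff_downUp_comp_shiftPos (h : m + 1 = N) {w : Fin N → ℕ}
    (hmin : ∀ i : Fin N, (i : ℕ) ≠ 0 → w ⟨0, by omega⟩ < w i) :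
    UpDown N w ↔ DownUp m (w ∘ shiftPos h) := by
  constructor
  · intro hw i hi
    have := hw (i + 1) (by omega)
    exact ⟨fun hpar => this.2 (by omega), fun hpar => this.1 (by omega)⟩
  · intro hw i hi
    cases i with
    | zero => exact ⟨fun _ => hmin _ (by simp), fun hpar => absurd hpar (by decide)⟩
    | succ i =>
      have := hw i (by omega)
      exact ⟨fun hpar => this.2 (by omega), fun hpar => this.1 (by omega)⟩

/-- The paper's `w ↦ π^c`, for a word `w` of length `N = m + 1`. -/
def tailCompl (h : m + 1 = N) (w : Fin N → ℕ) : Fin m → ℕ :=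
  fun i => N - (w (shiftPos h i) - 1)

def consOneCompl (h : m + 1 = N) (u : Fin m → ℕ) : Fin N → ℕ :=
  fun i => if hi : (i : ℕ) = 0 then 1 else N - (u ⟨i - 1, by omega⟩ - 1)

lemma consOneCompl_zero (h : m + 1 = N) (u : Fin m → ℕ) :
    consOneCompl h u ⟨0, by omega⟩ = 1 := rfl

lemma tailCompl_consOneCompl (h : m + 1 = N) {u : Fin m → ℕ} (hu : IsPermOn m u) :
    tailCompl h (consOneCompl h u) = u := by
  funext i
  have := Finset.mem_Icc.1 (hu.2 i)
  simp only [tailCompl, consOneCompl, shiftPos, Nat.add_one_ne_zero, dite_false,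
    Nat.add_sub_cancel, Fin.eta]
  omega

lemma consOneCompl_tailCompl (h : m + 1 = N) {w : Fin N → ℕ} (hw0 : w ⟨0, by omega⟩ = 1)
    (hw : IsPermOn N w) : consOneCompl h (tailCompl h w) = w := by
  funext i
  by_cases hi : (i : ℕ) = 0
  · rw [show i = ⟨0, by omega⟩ from Fin.ext hi, hw0]; rfl
  · have hshift : shiftPos h ⟨i - 1, by omega⟩ = i := Fin.ext (by simp only [shiftPos]; omega)
    have := Finset.mem_Icc.1 (hw.2 i)
    simp only [consOneCompl, tailCompl, hi, dite_false, hshift]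
    omega

lemma isPermOn_iff_isPermOn_tailCompl (h : m + 1 = N) {w : Fin N → ℕ}
    (hw0 : w ⟨0, by omega⟩ = 1) : IsPermOn N w ↔ IsPermOn m (tailCompl h w) := by
  have htail : ∀ i : Fin N, (i : ℕ) ≠ 0 → ∃ j, shiftPos h j = i := fun i hi =>
    ⟨⟨i - 1, by omega⟩, Fin.ext (by simp only [shiftPos]; omega)⟩
  simp only [IsPermOn, tailCompl, Finset.mem_Icc]
  constructor
  · rintro ⟨hinj, hmem⟩
    have hgt : ∀ j, 1 < w (shiftPos h j) := fun j => by
      have hne : w (shiftPos h j) ≠ 1 := fun hj =>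
        absurd (congrArg Fin.val (hinj (hj.trans hw0.symm))) (by simp [shiftPos])
      have := hmem (shiftPos h j); omega
    refine ⟨fun i j hij => (shiftPos_strictMono h).injective (hinj ?_), fun i => ?_⟩
    · have := hgt i; have := hgt j; have := hmem (shiftPos h i); have := hmem (shiftPos h j)
      simp only [tailCompl] at hij; omega
    · have := hgt i; have := hmem (shiftPos h i); omega
  · rintro ⟨hinj, hmem⟩
    have hgt : ∀ j, 1 < w (shiftPos h j) ∧ w (shiftPos h j) ≤ N := fun j => by
      have := hmem j; omega
    refine ⟨fun i j hij => ?_, fun i => ?_⟩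
    · by_cases hi : (i : ℕ) = 0 <;> by_cases hj : (j : ℕ) = 0
      · exact Fin.ext (by omega)
      · obtain ⟨j', rfl⟩ := htail j hj
        have := hgt j'; rw [show i = ⟨0, by omega⟩ from Fin.ext hi] at hij; omega
      · obtain ⟨i', rfl⟩ := htail i hi
        have := hgt i'; rw [show j = ⟨0, by omega⟩ from Fin.ext hj] at hij; omega
      · obtain ⟨i', rfl⟩ := htail i hi
        obtain ⟨j', rfl⟩ := htail j hj
        exact congrArg (shiftPos h) (hinj (by simp only [tailCompl, hij]))
    · by_cases hi : (i : ℕ) = 0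
      · rw [show i = ⟨0, by omega⟩ from Fin.ext hi, hw0]; omega
      · obtain ⟨i', rfl⟩ := htail i hi
        have := hgt i'; omega

lemma mem_avoidSet_iff_tailCompl_mem (h : m + 1 = N) {w : Fin N → ℕ}
    (hw0 : w ⟨0, by omega⟩ = 1) :
    w ∈ AvoidSet N p4312 ↔ tailCompl h w ∈ AvoidSet m p1243 := by
  simp only [AvoidSet, Set.mem_ofPred_eq, ← isPermOn_iff_isPermOn_tailCompl h hw0]
  refine and_congr_right fun ⟨hinj, hmem⟩ => ?_
  have hmin : ∀ i : Fin N, (i : ℕ) ≠ 0 → w ⟨0, by omega⟩ < w i := fun i hi => by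
    have hne : w i ≠ 1 := fun hwi => hi (by rw [hinj (hwi.trans hw0.symm)])
    have := Finset.mem_Icc.1 (hmem i); omega
  have hrev : ∀ i j, tailCompl h w i < tailCompl h w j ↔
      (w ∘ shiftPos h) j < (w ∘ shiftPos h) i := fun i j => by
    have := Finset.mem_Icc.1 (hmem (shiftPos h i)); have := Finset.mem_Icc.1 (hmem (shiftPos h j))
    simp only [tailCompl, Function.comp_apply]; omega
  rw [upDown_iff_downUp_comp_shiftPos h hmin, ← upDown_iff_downUp_of_lt_iff_swap hrev, Avoids,
    Avoids, ← contains_comp_shiftPos_iff h hmin ⟨2, by decide⟩,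
    contains_iff_of_lt_iff_swap (fun i j => (hrev j i).symm) p4312_lt_iff_p1243_lt_swap]

theorem bijOn_tailCompl (h : m + 1 = N) :
    Set.BijOn (tailCompl h) {w | w ∈ AvoidSet N p4312 ∧ w ⟨0, by omega⟩ = 1}
      (AvoidSet m p1243) := by
  refine ⟨fun w ⟨hw, hw0⟩ => (mem_avoidSet_iff_tailCompl_mem h hw0).1 hw, ?_, fun u hu => ?_⟩
  · rintro w ⟨⟨hw, -⟩, hw0⟩ w' ⟨⟨hw', -⟩, hw0'⟩ heq
    rw [← consOneCompl_tailCompl h hw0 hw, heq, consOneCompl_tailCompl h hw0' hw']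
  · refine ⟨consOneCompl h u, ⟨?_, consOneCompl_zero h u⟩, tailCompl_consOneCompl h hu.1⟩
    rw [mem_avoidSet_iff_tailCompl_mem h (consOneCompl_zero h u), tailCompl_consOneCompl h hu.1]
    exact hu

end Tail

theorem stmt19 (n : ℕ) (hn : 1 ≤ n) :
    Set.BijOn
      (fun (w : Fin (2 * n) → ℕ) => fun (i : Fin (2 * n - 1)) =>
        2 * n - (w ⟨(i : ℕ) + 1, by have := i.isLt; omega⟩ - 1))
      {w | w ∈ AvoidSet (2 * n) p4312 ∧ w ⟨0, by omega⟩ = 1}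
      (AvoidSet (2 * n - 1) p1243) :=
  bijOn_tailCompl (by omega)
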